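/- arXiv:1010.4612 — 3 statements merged into one kernel-verified Lean document; each statement's English description precedes it below -/
import Mathlib

section
/- Let x ∈ ℝ^N, let x_k be its best k-term approximation supported on T0 with |T0| = k, and let T̃ ⊆ {1,…,N} be a support estimate with |T̃| = ρk and |T̃ ∩ T0| = αρk. Let A be an n×N real matrix, let y = Ax + e with ‖e‖₂ ≤ ε, and suppose there exists a real a with ak an integer, a ≥ (1−α)ρ, a > 1, such that the restricted isometry constants of A satisfy δ_{ak} + (a/γ²)·δ_{(a+1)k} < a/γ² − 1, where γ = ω + (1−ω)·√(1+ρ−2αρ) for some 0 ≤ ω ≤ 1. Then any solution x* of the weighted ℓ1 minimization problem minimize ‖z‖_{1,w} subject to ‖Az − y‖₂ ≤ ε (with weights w_i = ω for i ∈ T̃, w_i = 1 otherwise) — equivalently, any x* with ‖Ax* − y‖₂ ≤ ε and ‖x*‖_{1,w} ≤ ‖x‖_{1,w} — satisfies ‖x* − x‖₂ ≤ C0′·ε + C1′·k^{−1/2}·(ω·‖x − x_k‖₁ + (1−ω)·‖x_{T̃ᶜ∩T0ᶜ}‖₁), where C0′ = 2(1 + γ/√a)/(√(1−δ_{(a+1)k})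 − (γ/√a)·√(1+δ_{ak})) and C1′ = 2a^{−1/2}(√(1−δ_{(a+1)k}) + √(1+δ_{ak}))/(√(1−δ_{(a+1)k}) − (γ/√a)·√(1+δ_{ak})). -/
open scoped BigOperators

noncomputable section

/-- The ℓ1 norm of a finite real vector. -/
def l1norm {ι : Type*} [Fintype ι] (v : ι → ℝ) : ℝ := ∑ i, |v i|

/-- The Euclidean (ℓ2) norm of a finite real vector. -/
def l2norm {ι : Type*} [Fintype ι] (v : ι → ℝ) : ℝ := Real.sqrt (∑ i, (v i) ^ 2)

/-- The ℓ∞ norm of a finite real vector. -/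
def linfnorm {ι : Type*} [Fintype ι] (v : ι → ℝ) : ℝ := ⨆ i, |v i|

/-- The weighted ℓ1 norm `‖v‖_{1,w} = ∑ i, w i * |v i|`. -/
def wl1norm {ι : Type*} [Fintype ι] (w v : ι → ℝ) : ℝ := ∑ i, w i * |v i|

/-- `restrict v S` is the vector equal to `v` on `S` and zero outside `S`. -/
def restrict {ι : Type*} [DecidableEq ι] (v : ι → ℝ) (S : Finset ι) : ι → ℝ :=
  fun i => if i ∈ S then v i else 0

/-- A vector is `m`-sparse if it has at most `m` nonzero entries. -/
def IsSparse {ι : Type*} [Fintype ι] (m : ℕ) (v : ι → ℝ) : Prop :=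
  (Finset.univ.filter (fun i => v i ≠ 0)).card ≤ m

/-- The restricted isometry constant `δ_m` of a matrix `A`: the smallest `δ ≥ 0` such
that `(1-δ)‖u‖₂² ≤ ‖Au‖₂² ≤ (1+δ)‖u‖₂²` for every `m`-sparse vector `u`. -/
def ripConst {n N : ℕ} (A : Matrix (Fin n) (Fin N) ℝ) (m : ℕ) : ℝ :=
  sInf {δ : ℝ | 0 ≤ δ ∧ ∀ u : Fin N → ℝ, IsSparse m u →
    (1 - δ) * (∑ i, (u i) ^ 2) ≤ (∑ j, (A.mulVec u j) ^ 2) ∧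
    (∑ j, (A.mulVec u j) ^ 2) ≤ (1 + δ) * (∑ i, (u i) ^ 2)}

end

/-!
Write `h = xs - x`. Optimality of `xs` for the weighted ℓ1 norm confines `h` to a cone:
`‖h_{T0ᶜ}‖₁ ≤ ω ‖h_{T0}‖₁ + (1 - ω) ‖h_{T0 ∆ Tt}‖₁ + 2ξ`, where `ξ` is the weighted tail of `x`.
Let `B0` carry the `ak` largest entries of `h` off `T0`. Since `|Tt \ T0| ≤ ak`, Cauchy–Schwarz
turns the cone bound into `‖h_{T0ᶜ}‖₁ ≤ γ √k ‖h_{T0 ∪ B0}‖₂ + 2ξ`. Cutting the rest of `T0ᶜ` into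
blocks of `ak` entries in decreasing order, each block is dominated entrywise by the average of
the previous one, so the ℓ2 norms of the blocks add up to at most `‖h_{T0ᶜ}‖₁ / √(ak)`. The lower
RIP bound on the `(a+1)k`-sparse `h_{T0 ∪ B0}`, the upper one on the blocks and `‖Ah‖₂ ≤ 2ε`
then bound `‖h_{T0 ∪ B0}‖₂`, and with it `‖h‖₂`.
-/

theorem restrict_union {ι : Type*} [DecidableEq ι] (v : ι → ℝ) {S T : Finset ι}
    (h : Disjoint S T) : restrict v (S ∪ T) = restrict v S + restrict v T := by
  ext i
  by_cases hS : i ∈ S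
  · simp [restrict, hS, Finset.disjoint_left.mp h hS]
  · by_cases hT : i ∈ T <;> simp [restrict, hS, hT]

section Norms

variable {ι : Type*} [Fintype ι]

theorem l2norm_eq_norm (v : ι → ℝ) : l2norm v = ‖(WithLp.toLp 2 v : EuclideanSpace ℝ ι)‖ := by
  simp [l2norm, EuclideanSpace.norm_eq]

theorem l2norm_add_le (u v : ι → ℝ) : l2norm (u + v) ≤ l2norm u + l2norm v := by
  simpa only [l2norm_eq_norm, WithLp.toLp_add] using norm_add_le _ _

theorem l2norm_sub_le (u v : ι → ℝ) :
    l2norm (u - v) ≤ l2norm u + l2norm v := by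
  simpa only [l2norm_eq_norm, WithLp.toLp_sub] using norm_sub_le _ _

theorem l2norm_list_sum_le (us : List (ι → ℝ)) : l2norm us.sum ≤ (us.map l2norm).sum := by
  induction us with
  | nil => simp [l2norm]
  | cons u us ih =>
    simpa only [List.sum_cons, List.map_cons] using
      (l2norm_add_le u us.sum).trans (add_le_add le_rfl ih)

variable [DecidableEq ι]

theorem l2norm_restrict (v : ι → ℝ) (S : Finset ι) :
    l2norm (restrict v S) = √(∑ i ∈ S, v i ^ 2) := by
  simp [l2norm, restrict, ite_pow, Finset.sum_ite_mem]

theorem l1norm_restrict (v : ι → ℝ) (S : Finset ι) :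
    l1norm (restrict v S) = ∑ i ∈ S, |v i| := by
  simp [l1norm, restrict, apply_ite, Finset.sum_ite_mem]

theorem sub_restrict (v : ι → ℝ) (S : Finset ι) : v - restrict v S = restrict v Sᶜ := by
  ext i
  by_cases hi : i ∈ S <;> simp [restrict, hi]

theorem isSparse_restrict (v : ι → ℝ) {S : Finset ι} {m : ℕ} (h : S.card ≤ m) :
    IsSparse m (restrict v S) :=
  (Finset.card_le_card fun i hi => by
    by_contra hiS
    simp [restrict, hiS] at hi).trans h

end Norms

theorem sum_abs_le_sqrt_card_mul {ι : Type*} (v : ι → ℝ) (S : Finset ι) :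
    ∑ i ∈ S, |v i| ≤ √S.card * √(∑ i ∈ S, v i ^ 2) := by
  rw [← Real.sqrt_mul (Nat.cast_nonneg _)]
  refine Real.le_sqrt_of_sq_le ?_
  simpa only [sq_abs] using sq_sum_le_card_mul_sum_sq (s := S) (f := fun i => |v i|)

section RIP

variable {n N : ℕ} (A : Matrix (Fin n) (Fin N) ℝ)

theorem exists_mem_ripSet (m : ℕ) : ∃ δ : ℝ, 0 ≤ δ ∧ ∀ u : Fin N → ℝ, IsSparse m u →
    (1 - δ) * (∑ i, (u i) ^ 2) ≤ (∑ j, (A.mulVec u j) ^ 2) ∧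
    (∑ j, (A.mulVec u j) ^ 2) ≤ (1 + δ) * (∑ i, (u i) ^ 2) := by
  set C : ℝ := ∑ j, ∑ i, A j i ^ 2
  have hC : 0 ≤ C := by positivity
  refine ⟨1 + C, by positivity, fun u _ => ?_⟩
  have hu : 0 ≤ ∑ i, u i ^ 2 := by positivity
  have hAu : 0 ≤ ∑ j, (A.mulVec u j) ^ 2 := by positivity
  have hrows : ∑ j, (A.mulVec u j) ^ 2 ≤ C * ∑ i, u i ^ 2 := by
    rw [Finset.sum_mul]
    exact Finset.sum_le_sum fun j _ => by
      simpa only [Matrix.mulVec, dotProduct] using Finset.sum_mul_sq_le_sq_mul_sq _ (A j) u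
  constructor <;> nlinarith

theorem ripConst_nonneg (m : ℕ) : 0 ≤ ripConst A m :=
  le_csInf (exists_mem_ripSet A m) fun _ hδ => hδ.1

theorem ripConst_spec {m : ℕ} {u : Fin N → ℝ} (hu : IsSparse m u) :
    (1 - ripConst A m) * (∑ i, (u i) ^ 2) ≤ (∑ j, (A.mulVec u j) ^ 2) ∧
    (∑ j, (A.mulVec u j) ^ 2) ≤ (1 + ripConst A m) * (∑ i, (u i) ^ 2) := by
  have hne := exists_mem_ripSet A m
  obtain ⟨δ₀, -, hδ₀u⟩ := exists_mem_ripSet A m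
  rcases (show (0 : ℝ) ≤ ∑ i, u i ^ 2 by positivity).eq_or_lt with hq | hq
  · have := hδ₀u u hu
    rw [← hq] at this ⊢
    exact ⟨by simp only [mul_zero]; positivity, by linarith⟩
  · have hlow : 1 - (∑ j, (A.mulVec u j) ^ 2) / ∑ i, u i ^ 2 ≤ ripConst A m :=
      le_csInf hne fun δ ⟨_, hδ⟩ => by
        rw [sub_le_comm, le_div_iff₀ hq]; linarith [(hδ u hu).1]
    have hup : (∑ j, (A.mulVec u j) ^ 2) / ∑ i, u i ^ 2 - 1 ≤ ripConst A m :=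
      le_csInf hne fun δ ⟨_, hδ⟩ => by
        rw [sub_le_iff_le_add, div_le_iff₀ hq]; linarith [(hδ u hu).2]
    rw [sub_le_comm, le_div_iff₀ hq] at hlow
    rw [sub_le_iff_le_add, div_le_iff₀ hq] at hup
    constructor <;> linarith

theorem l2norm_mulVec_le {m : ℕ} {u : Fin N → ℝ} (hu : IsSparse m u) :
    l2norm (A.mulVec u) ≤ √(1 + ripConst A m) * l2norm u := by
  rw [l2norm, l2norm, ← Real.sqrt_mul' _ (by positivity)]
  exact Real.sqrt_le_sqrt (ripConst_spec A hu).2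

theorem le_l2norm_mulVec {m : ℕ} {u : Fin N → ℝ} (hu : IsSparse m u) :
    √(1 - ripConst A m) * l2norm u ≤ l2norm (A.mulVec u) := by
  rw [l2norm, l2norm, ← Real.sqrt_mul' _ (by positivity)]
  exact Real.sqrt_le_sqrt (ripConst_spec A hu).1

theorem l2norm_mulVec_list_sum_le {m : ℕ} {us : List (Fin N → ℝ)}
    (hus : ∀ u ∈ us, IsSparse m u) :
    l2norm (A.mulVec us.sum) ≤ √(1 + ripConst A m) * (us.map l2norm).sum := by
  induction us with
  | nil => simp [l2norm]
  | cons u us ih =>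
    rw [List.sum_cons, Matrix.mulVec_add, List.map_cons, List.sum_cons, mul_add]
    exact (l2norm_add_le _ _).trans <| add_le_add (l2norm_mulVec_le A (hus u (by simp)))
      (ih fun v hv => hus v (List.mem_cons_of_mem u hv))

theorem sqrt_one_sub_ripConst_mul_le {m m₀ : ℕ}
    {u₀ : Fin N → ℝ} {us : List (Fin N → ℝ)} (hu₀ : IsSparse m₀ u₀)
    (hus : ∀ u ∈ us, IsSparse m u) :
    √(1 - ripConst A m₀) * l2norm u₀ ≤
      l2norm (A.mulVec (u₀ + us.sum)) + √(1 + ripConst A m) * (us.map l2norm).sum := by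
  have hsplit : A.mulVec u₀ = A.mulVec (u₀ + us.sum) - A.mulVec us.sum := by
    rw [Matrix.mulVec_add, add_sub_cancel_right]
  calc √(1 - ripConst A m₀) * l2norm u₀ ≤ l2norm (A.mulVec u₀) := le_l2norm_mulVec A hu₀
    _ ≤ _ := hsplit ▸ l2norm_sub_le _ _
    _ ≤ _ := add_le_add le_rfl (l2norm_mulVec_list_sum_le A hus)

end RIP

section Blocks

theorem sum_le_sum_of_card_le_of_forall_le {ι : Type*} {f : ι → ℝ} {X Y : Finset ι}
    (hcard : X.card ≤ Y.card) (hY : ∀ j ∈ Y, 0 ≤ f j) (hXY : ∀ i ∈ X, ∀ j ∈ Y, f i ≤ f j) :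
    ∑ i ∈ X, f i ≤ ∑ j ∈ Y, f j := by
  rcases Y.eq_empty_or_nonempty with rfl | hYne
  · simp [Finset.card_eq_zero.mp (Nat.le_zero.mp hcard)]
  obtain ⟨j₀, hj₀, hmin⟩ := Y.exists_min_image f hYne
  calc ∑ i ∈ X, f i ≤ X.card • f j₀ := Finset.sum_le_card_nsmul X f _ fun i hi => hXY i hi j₀ hj₀
    _ ≤ Y.card • f j₀ := nsmul_le_nsmul_left (hY j₀ hj₀) hcard
    _ ≤ ∑ j ∈ Y, f j := Finset.card_nsmul_le_sum Y f _ hmin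

theorem sqrt_sum_sq_le_of_forall_abs_le {ι : Type*} {v : ι → ℝ} {B M : Finset ι} {m : ℕ}
    (hm : 0 < m) (hB : B.card ≤ m) (hM : m ≤ M.card) (hdom : ∀ i ∈ B, ∀ j ∈ M, |v i| ≤ |v j|) :
    √(∑ i ∈ B, v i ^ 2) ≤ (√m)⁻¹ * ∑ j ∈ M, |v j| := by
  set t := ∑ j ∈ M, |v j|
  have hm' : (0 : ℝ) < m := Nat.cast_pos.mpr hm
  have ht : 0 ≤ t := by positivity
  have hentry : ∀ i ∈ B, |v i| ≤ t / m := fun i hi => by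
    rw [le_div_iff₀ hm', mul_comm]
    calc (m : ℝ) * |v i| ≤ M.card • |v i| := by rw [nsmul_eq_mul]; gcongr
      _ ≤ t := Finset.card_nsmul_le_sum M _ _ (hdom i hi)
  have hsq : ∑ i ∈ B, v i ^ 2 ≤ t ^ 2 / m :=
    calc ∑ i ∈ B, v i ^ 2 ≤ B.card • (t / m) ^ 2 :=
          Finset.sum_le_card_nsmul B _ _ fun i hi => by
            rw [← sq_abs]; gcongr; exact hentry i hi
      _ ≤ m • (t / m) ^ 2 := nsmul_le_nsmul_left (by positivity) hB
      _ = t ^ 2 / m := by rw [nsmul_eq_mul]; field_simp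
  calc √(∑ i ∈ B, v i ^ 2) ≤ √(t ^ 2 / m) := Real.sqrt_le_sqrt hsq
    _ = (√m)⁻¹ * t := by rw [Real.sqrt_div' _ hm'.le, Real.sqrt_sq ht, div_eq_inv_mul]

variable {ι : Type*} [DecidableEq ι]

theorem sum_le_sum_of_forall_sdiff_le {f : ι → ℝ} {W M : Finset ι} (hcard : W.card ≤ M.card)
    (hM : ∀ j ∈ M, 0 ≤ f j) (hdom : ∀ i ∈ W \ M, ∀ j ∈ M, f i ≤ f j) :
    ∑ i ∈ W, f i ≤ ∑ j ∈ M, f j := by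
  rw [← Finset.sum_inter_add_sum_sdiff W M, ← Finset.sum_inter_add_sum_sdiff M W,
    Finset.inter_comm]
  have hWM := Finset.card_sdiff_add_card_inter W M
  have hMW := Finset.card_sdiff_add_card_inter M W
  rw [Finset.inter_comm] at hMW
  refine add_le_add le_rfl (sum_le_sum_of_card_le_of_forall_le (by omega)
    (fun j hj => hM j (Finset.mem_sdiff.mp hj).1) fun i hi j hj => hdom i hi j ?_)
  exact (Finset.mem_sdiff.mp hj).1

theorem exists_top_subset (f : ι → ℝ) (m : ℕ) (S : Finset ι) :
    ∃ M ⊆ S, M.card = min m S.card ∧ ∀ i ∈ S \ M, ∀ j ∈ M, f i ≤ f j := by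
  induction m generalizing S with
  | zero => exact ⟨∅, Finset.empty_subset _, by simp, by simp⟩
  | succ m ih =>
    rcases S.eq_empty_or_nonempty with rfl | hS
    · exact ⟨∅, subset_rfl, by simp, by simp⟩
    obtain ⟨i₀, hi₀, hmax⟩ := S.exists_max_image f hS
    obtain ⟨M, hMS, hMcard, hMtop⟩ := ih (S.erase i₀)
    have hi₀M : i₀ ∉ M := fun h => Finset.notMem_erase i₀ S (hMS h)
    refine ⟨insert i₀ M, Finset.insert_subset hi₀ (hMS.trans (S.erase_subset i₀)), ?_, ?_⟩
    · rw [Finset.card_insert_of_notMem hi₀M, hMcard, Finset.card_erase_of_mem hi₀]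
      have := hS.card_pos
      omega
    · intro i hi j hj
      simp only [Finset.mem_sdiff, Finset.mem_insert, not_or] at hi
      rcases Finset.mem_insert.mp hj with rfl | hjM
      · exact hmax i hi.1
      · exact hMtop i (by simp [hi]) j hjM

theorem sum_sq_le_sum_sq_of_forall_abs_le {v : ι → ℝ} {S M W : Finset ι} {m : ℕ}
    (hMcard : M.card = min m S.card) (hdom : ∀ i ∈ S \ M, ∀ j ∈ M, |v i| ≤ |v j|)
    (hW : W ⊆ S) (hWm : W.card ≤ m) :
    ∑ i ∈ W, v i ^ 2 ≤ ∑ i ∈ M, v i ^ 2 :=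
  sum_le_sum_of_forall_sdiff_le (hMcard ▸ le_min hWm (Finset.card_le_card hW))
    (fun _ _ => sq_nonneg _) fun i hi j hj =>
      sq_le_sq.mpr (hdom i (Finset.sdiff_subset_sdiff hW subset_rfl hi) j hj)

theorem exists_top_subset_and_tail_decomposition [Fintype ι] (v : ι → ℝ) {m : ℕ} (hm : 0 < m)
    (S : Finset ι) :
    ∃ M ⊆ S, M.card ≤ m ∧
      (∀ W ⊆ S, W.card ≤ m → ∑ i ∈ W, v i ^ 2 ≤ ∑ i ∈ M, v i ^ 2) ∧
      ∃ us : List (ι → ℝ), (∀ u ∈ us, IsSparse m u) ∧ restrict v (S \ M) = us.sum ∧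
        (us.map l2norm).sum ≤ (√m)⁻¹ * ∑ i ∈ S, |v i| := by
  induction S using Finset.strongInduction with
  | H S ih =>
  obtain ⟨M, hMS, hMcard, hMtop⟩ := exists_top_subset (fun i => |v i|) m S
  refine ⟨M, hMS, hMcard ▸ min_le_left _ _,
    fun W hW hWm => sum_sq_le_sum_sq_of_forall_abs_le hMcard hMtop hW hWm, ?_⟩
  rcases (S \ M).eq_empty_or_nonempty with hSM | hSM
  · refine ⟨[], by simp, ?_, by simp only [List.map_nil, List.sum_nil]; positivity⟩
    ext i
    simp [restrict, hSM]
  have hcard := Finset.card_sdiff_of_subset hMS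
  have hMm : M.card = m := by have := hSM.card_pos; omega
  have hMne : M.Nonempty := Finset.card_pos.mp (hMm ▸ hm)
  obtain ⟨M', hM'S, hM'm, -, us, hus, hsum, hbound⟩ :=
    ih (S \ M) (Finset.sdiff_ssubset hMS hMne)
  have hhead : l2norm (restrict v M') ≤ (√m)⁻¹ * ∑ j ∈ M, |v j| := by
    rw [l2norm_restrict]
    exact sqrt_sum_sq_le_of_forall_abs_le hm hM'm hMm.ge fun i hi j hj => hMtop i (hM'S hi) j hj
  refine ⟨restrict v M' :: us, ?_, ?_, ?_⟩
  · exact List.forall_mem_cons.mpr ⟨isSparse_restrict v hM'm, hus⟩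
  · rw [List.sum_cons, ← hsum, ← restrict_union v Finset.disjoint_sdiff,
      Finset.union_sdiff_of_subset hM'S]
  · rw [List.map_cons, List.sum_cons, ← Finset.sum_sdiff hMS, mul_add]
    linarith

end Blocks

section Cone

variable {ι : Type*} [DecidableEq ι]

theorem card_sdiff_le_of_card_eq {T0 Tt : Finset ι} {k m : ℕ} {a ρ α : ℝ}
    (hTt : (Tt.card : ℝ) = ρ * k) (hTtT0 : ((Tt ∩ T0).card : ℝ) = α * ρ * k)
    (hm : (m : ℝ) = a * k) (haαρ : (1 - α) * ρ ≤ a) :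
    (Tt \ T0).card ≤ m := by
  have hdiff : ((Tt \ T0).card : ℝ) + (Tt ∩ T0).card = Tt.card := by
    exact_mod_cast Finset.card_sdiff_add_card_inter Tt T0
  have : ((Tt \ T0).card : ℝ) ≤ m := by
    rw [hm]
    nlinarith [mul_le_mul_of_nonneg_right haαρ (Nat.cast_nonneg k)]
  exact_mod_cast this

theorem card_symmDiff_eq {T0 Tt : Finset ι} {k : ℕ} {ρ α : ℝ} (hT0 : T0.card = k)
    (hTt : (Tt.card : ℝ) = ρ * k) (hTtT0 : ((Tt ∩ T0).card : ℝ) = α * ρ * k) :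
    ((symmDiff T0 Tt).card : ℝ) = k * (1 + ρ - 2 * α * ρ) := by
  have hT0' : ((T0 \ Tt).card : ℝ) + (Tt ∩ T0).card = k := by
    rw [Finset.inter_comm, ← hT0]
    exact_mod_cast Finset.card_sdiff_add_card_inter T0 Tt
  have hTt' : ((Tt \ T0).card : ℝ) + (Tt ∩ T0).card = Tt.card := by
    exact_mod_cast Finset.card_sdiff_add_card_inter Tt T0
  rw [Finset.symmDiff_def, Finset.card_union_of_disjoint disjoint_sdiff_sdiff]
  push_cast
  linarith

theorem sum_sq_symmDiff_le {v : ι → ℝ} {T0 Tt B : Finset ι} (hB : Disjoint T0 B)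
    (hTtB : ∑ i ∈ Tt \ T0, v i ^ 2 ≤ ∑ i ∈ B, v i ^ 2) :
    ∑ i ∈ symmDiff T0 Tt, v i ^ 2 ≤ ∑ i ∈ T0 ∪ B, v i ^ 2 := by
  rw [Finset.symmDiff_def, Finset.sum_union disjoint_sdiff_sdiff, Finset.sum_union hB]
  exact add_le_add (Finset.sum_le_sum_of_subset_of_nonneg Finset.sdiff_subset
    fun _ _ _ => sq_nonneg _) hTtB

theorem sum_weight_mul_eq {w : ι → ℝ} {Tt : Finset ι} {ω : ℝ}
    (hw : ∀ i, w i = if i ∈ Tt then ω else 1) (S : Finset ι) (g : ι → ℝ) :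
    ∑ i ∈ S, w i * g i = ω * ∑ i ∈ S, g i + (1 - ω) * ∑ i ∈ S \ Tt, g i := by
  have hon : ∑ i ∈ S ∩ Tt, w i * g i = ω * ∑ i ∈ S ∩ Tt, g i := by
    rw [Finset.mul_sum]
    exact Finset.sum_congr rfl fun i hi => by rw [hw, if_pos (Finset.mem_inter.mp hi).2]
  have hoff : ∑ i ∈ S \ Tt, w i * g i = ∑ i ∈ S \ Tt, g i :=
    Finset.sum_congr rfl fun i hi => by rw [hw, if_neg (Finset.mem_sdiff.mp hi).2, one_mul]
  rw [← Finset.sum_inter_add_sum_sdiff S Tt, hon, hoff, ← Finset.sum_inter_add_sum_sdiff S Tt g]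
  ring

variable [Fintype ι]

theorem sum_compl_mul_abs_sub_le {w x xs : ι → ℝ} (hw : ∀ i, 0 ≤ w i)
    (hopt : wl1norm w xs ≤ wl1norm w x) (T : Finset ι) :
    ∑ i ∈ Tᶜ, w i * |xs i - x i| ≤
      ∑ i ∈ T, w i * |xs i - x i| + 2 * ∑ i ∈ Tᶜ, w i * |x i| := by
  have hoff : ∀ i, w i * |xs i - x i| ≤ w i * |xs i| + w i * |x i| := fun i => by
    rw [← mul_add]
    exact mul_le_mul_of_nonneg_left (abs_sub _ _) (hw i)
  have hon : ∀ i, w i * |x i| ≤ w i * |xs i| + w i * |xs i - x i| := fun i => by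
    rw [← mul_add, abs_sub_comm]
    exact mul_le_mul_of_nonneg_left (by linarith [abs_sub_abs_le_abs_sub (x i) (xs i)]) (hw i)
  have hTc := Finset.sum_le_sum fun i (_ : i ∈ Tᶜ) => hoff i
  have hT := Finset.sum_le_sum fun i (_ : i ∈ T) => hon i
  rw [Finset.sum_add_distrib] at hTc hT
  rw [wl1norm, wl1norm, ← Finset.sum_add_sum_compl T, ← Finset.sum_add_sum_compl T] at hopt
  linarith

theorem sum_abs_sub_compl_le_of_wl1norm_le {w x xs : ι → ℝ} {T0 Tt : Finset ι} {ω : ℝ}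
    (hω : 0 ≤ ω) (hw : ∀ i, w i = if i ∈ Tt then ω else 1)
    (hopt : wl1norm w xs ≤ wl1norm w x) :
    ∑ i ∈ T0ᶜ, |xs i - x i| ≤ ω * ∑ i ∈ T0, |xs i - x i| +
      (1 - ω) * ∑ i ∈ symmDiff T0 Tt, |xs i - x i| +
        2 * (ω * ∑ i ∈ T0ᶜ, |x i| + (1 - ω) * ∑ i ∈ T0ᶜ \ Tt, |x i|) := by
  have hw0 : ∀ i, 0 ≤ w i := fun i => by rw [hw]; split_ifs <;> linarith
  have hcone := sum_compl_mul_abs_sub_le hw0 hopt T0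
  simp only [sum_weight_mul_eq hw] at hcone
  have hcompl := Finset.sum_inter_add_sum_sdiff T0ᶜ Tt fun i => |xs i - x i|
  have hsymm : ∑ i ∈ symmDiff T0 Tt, |xs i - x i| =
      ∑ i ∈ T0 \ Tt, |xs i - x i| + ∑ i ∈ T0ᶜ ∩ Tt, |xs i - x i| := by
    rw [Finset.symmDiff_def, Finset.sum_union disjoint_sdiff_sdiff, Finset.sdiff_eq_inter_compl Tt,
      Finset.inter_comm]
  rw [hsymm]
  linear_combination hcone - (1 - ω) * hcompl

theorem sum_abs_sub_compl_le_mul_l2norm {w x xs : ι → ℝ} {T0 Tt B : Finset ι} {k : ℕ} {ω β : ℝ}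
    (hω0 : 0 ≤ ω) (hω1 : ω ≤ 1) (hw : ∀ i, w i = if i ∈ Tt then ω else 1)
    (hopt : wl1norm w xs ≤ wl1norm w x) (hT0 : T0.card = k)
    (hsymm : ((symmDiff T0 Tt).card : ℝ) = k * β) (hB : Disjoint T0 B)
    (hTtB : ∑ i ∈ Tt \ T0, (xs i - x i) ^ 2 ≤ ∑ i ∈ B, (xs i - x i) ^ 2) :
    ∑ i ∈ T0ᶜ, |xs i - x i| ≤
      (ω + (1 - ω) * √β) * √k * l2norm (restrict (xs - x) (T0 ∪ B)) +
        2 * (ω * l1norm (x - restrict x T0) + (1 - ω) * l1norm (restrict x (Ttᶜ ∩ T0ᶜ))) := by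
  set E := l2norm (restrict (xs - x) (T0 ∪ B))
  have hl1 : ∀ S, ∑ i ∈ S, (xs i - x i) ^ 2 ≤ ∑ i ∈ T0 ∪ B, (xs i - x i) ^ 2 →
      ∑ i ∈ S, |xs i - x i| ≤ √S.card * E := fun S hS =>
    (sum_abs_le_sqrt_card_mul _ S).trans
      (mul_le_mul_of_nonneg_left ((Real.sqrt_le_sqrt hS).trans_eq (l2norm_restrict (xs - x) _).symm)
        (Real.sqrt_nonneg _))
  have hT0E := hl1 T0 (Finset.sum_le_sum_of_subset_of_nonneg Finset.subset_union_left
    fun _ _ _ => sq_nonneg _)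
  have hsymmE := hl1 _ (sum_sq_symmDiff_le hB hTtB)
  rw [hT0] at hT0E
  rw [hsymm, Real.sqrt_mul (Nat.cast_nonneg k)] at hsymmE
  rw [sub_restrict, l1norm_restrict, l1norm_restrict, Finset.inter_comm,
    ← Finset.sdiff_eq_inter_compl]
  have h1ω : 0 ≤ 1 - ω := sub_nonneg.mpr hω1
  calc ∑ i ∈ T0ᶜ, |xs i - x i|
      ≤ _ := sum_abs_sub_compl_le_of_wl1norm_le hω0 hw hopt
    _ ≤ ω * (√k * E) + (1 - ω) * (√k * √β * E) +
        2 * (ω * ∑ i ∈ T0ᶜ, |x i| + (1 - ω) * ∑ i ∈ T0ᶜ \ Tt, |x i|) := by gcongr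
    _ = _ := by ring

end Cone

theorem div_mul_sqrt_lt_sqrt_of_ripCondition {δ₁ δ₂ a γ : ℝ} (hδ₁ : 0 ≤ δ₁) (ha : 0 < a)
    (h : δ₁ + (a / γ ^ 2) * δ₂ < a / γ ^ 2 - 1) :
    γ / √a * √(1 + δ₁) < √(1 - δ₂) := by
  -- with `γ = 0` the hypothesis reads `δ₁ < -1`, since `a / 0 = 0`
  have hγ : γ ≠ 0 := by
    rintro rfl
    norm_num at h
    linarith
  have hkey : (1 + δ₁) * γ ^ 2 < a * (1 - δ₂) := by
    have hgap : a * (1 - δ₂) - (1 + δ₁) * γ ^ 2 =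
        (a / γ ^ 2 - 1 - (δ₁ + a / γ ^ 2 * δ₂)) * γ ^ 2 := by
      field_simp
      ring
    have := mul_pos (sub_pos.mpr h) (by positivity : 0 < γ ^ 2)
    linarith
  rw [div_mul_eq_mul_div, div_lt_iff₀ (Real.sqrt_pos.mpr ha)]
  calc γ * √(1 + δ₁) ≤ |γ| * √(1 + δ₁) := by gcongr; exact le_abs_self γ
    _ = √((1 + δ₁) * γ ^ 2) := by rw [Real.sqrt_mul' _ (sq_nonneg _), Real.sqrt_sq_eq_abs, mul_comm]
    _ < √(a * (1 - δ₂)) := Real.sqrt_lt_sqrt (by positivity) hkey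
    _ = √(1 - δ₂) * √a := by rw [Real.sqrt_mul ha.le, mul_comm]

theorem l2norm_mulVec_sub_le_two_mul {m ι : Type*} [Fintype m] [Fintype ι]
    {A : Matrix m ι ℝ} {x xs : ι → ℝ} {e y : m → ℝ} {ε : ℝ} (hy : y = A.mulVec x + e)
    (he : l2norm e ≤ ε) (hfeas : l2norm (A.mulVec xs - y) ≤ ε) :
    l2norm (A.mulVec (xs - x)) ≤ 2 * ε := by
  have : A.mulVec (xs - x) = (A.mulVec xs - y) + e := by
    rw [Matrix.mulVec_sub, hy]
    abel
  rw [this]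
  linarith [l2norm_add_le (A.mulVec xs - y) e]

theorem le_of_rip_estimates {H E St s₁ s₂ c τ ε : ℝ} (hs₁ : 0 ≤ s₁) (hc : 0 ≤ c)
    (hD : c * s₁ < s₂) (hH : H ≤ E + St) (hSt : St ≤ c * E + τ)
    (hE : s₂ * E ≤ 2 * ε + s₁ * St) :
    H ≤ 2 * (1 + c) / (s₂ - c * s₁) * ε + (s₁ + s₂) / (s₂ - c * s₁) * τ := by
  have hD' : 0 < s₂ - c * s₁ := sub_pos.mpr hD
  have hE' : E ≤ (2 * ε + s₁ * τ) / (s₂ - c * s₁) := by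
    rw [le_div_iff₀ hD']
    nlinarith [mul_le_mul_of_nonneg_left hSt hs₁]
  calc H ≤ (1 + c) * E + τ := by linarith
    _ ≤ (1 + c) * ((2 * ε + s₁ * τ) / (s₂ - c * s₁)) + τ := by gcongr
    _ = _ := by field_simp; ring

theorem weighted_l1_recovery_general
    {n N : ℕ} (A : Matrix (Fin n) (Fin N) ℝ)
    (x : Fin N → ℝ) (e : Fin n → ℝ) (y : Fin n → ℝ)
    (k ak : ℕ) (a ρ α ω ε γ : ℝ)
    (T0 Tt : Finset (Fin N)) (xk : Fin N → ℝ) (w : Fin N → ℝ)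
    (hk : 1 ≤ k)
    -- `xk` is the best `k`-term approximation of `x`, supported on `T0` with `|T0| = k`
    (hT0card : T0.card = k)
    (hxk : xk = restrict x T0)
    -- the support estimate `Tt` has `|Tt| = ρk` and `|Tt ∩ T0| = αρk`
    (hTtcard : (Tt.card : ℝ) = ρ * k)
    (hTtT0card : ((Tt ∩ T0).card : ℝ) = α * ρ * k)
    -- `a` is a real number with `ak` an integer, `a ≥ (1-α)ρ`, `a > 1`
    (hak : (ak : ℝ) = a * k)
    (ha : 1 < a)
    (haαρ : (1 - α) * ρ ≤ a)
    -- the weight `ω ∈ [0,1]` and `γ = ω + (1-ω)√(1+ρ-2αρ)`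
    (hω0 : 0 ≤ ω) (hω1 : ω ≤ 1)
    (hγ : γ = ω + (1 - ω) * Real.sqrt (1 + ρ - 2 * α * ρ))
    -- RIP condition: `δ_{ak} + (a/γ²) δ_{(a+1)k} < a/γ² - 1`
    (hRIP : ripConst A ak + (a / γ ^ 2) * ripConst A (ak + k) < a / γ ^ 2 - 1)
    -- measurements `y = Ax + e` with `‖e‖₂ ≤ ε`
    (hy : y = A.mulVec x + e)
    (he : l2norm e ≤ ε)
    -- the weights: `ω` on `Tt`, `1` on `Ttᶜ`
    (hw : ∀ i, w i = if i ∈ Tt then ω else 1)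
    -- `xs` is any solution of the weighted ℓ1 problem
    (xs : Fin N → ℝ)
    (hfeas : l2norm (A.mulVec xs - y) ≤ ε)
    (hopt : wl1norm w xs ≤ wl1norm w x) :
    l2norm (xs - x) ≤
      (2 * (1 + γ / Real.sqrt a) /
          (Real.sqrt (1 - ripConst A (ak + k)) -
            (γ / Real.sqrt a) * Real.sqrt (1 + ripConst A ak))) * ε
      + (2 * (Real.sqrt a)⁻¹ * (Real.sqrt (1 - ripConst A (ak + k)) +
            Real.sqrt (1 + ripConst A ak)) /
          (Real.sqrt (1 - ripConst A (ak + k)) -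
            (γ / Real.sqrt a) * Real.sqrt (1 + ripConst A ak)))
        * (k : ℝ) ^ (-(1 / 2 : ℝ))
        * (ω * l1norm (x - xk) + (1 - ω) * l1norm (restrict x (Ttᶜ ∩ T0ᶜ))) := by
  set ξ := ω * l1norm (x - xk) + (1 - ω) * l1norm (restrict x (Ttᶜ ∩ T0ᶜ))
  have hk0 : (0 : ℝ) < k := Nat.cast_pos.mpr hk
  have ha0 : 0 < a := by linarith
  have hak0 : 0 < ak := by exact_mod_cast (hak ▸ mul_pos ha0 hk0 : (0 : ℝ) < ak)
  obtain ⟨B0, hB0, hB0card, hB0top, us, hus, htail, hSt⟩ :=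
    exists_top_subset_and_tail_decomposition (xs - x) hak0 T0ᶜ
  set E := l2norm (restrict (xs - x) (T0 ∪ B0))
  have hcone := sum_abs_sub_compl_le_mul_l2norm hω0 hω1 hw hopt hT0card
    (card_symmDiff_eq hT0card hTtcard hTtT0card)
    (Finset.disjoint_right.mpr fun i hi => Finset.mem_compl.mp (hB0 hi))
    (hB0top _ (fun i hi => Finset.mem_compl.mpr (Finset.mem_sdiff.mp hi).2)
      (card_sdiff_le_of_card_eq hTtcard hTtT0card hak haαρ))
  rw [← hγ, ← hxk] at hcone
  have hdecomp : xs - x = restrict (xs - x) (T0 ∪ B0) + us.sum := by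
    rw [← htail, Finset.sdiff_eq_inter_compl, ← Finset.compl_union, ← sub_restrict, add_sub_cancel]
  have hlow := sqrt_one_sub_ripConst_mul_le A
    (isSparse_restrict (m := ak + k) (xs - x) ((Finset.card_union_le T0 B0).trans (by omega))) hus
  rw [← hdecomp] at hlow
  have hsplit : l2norm (xs - x) ≤ E + (us.map l2norm).sum := by
    rw [hdecomp]
    exact (l2norm_add_le _ _).trans (add_le_add le_rfl (l2norm_list_sum_le us))
  have htail_le : (us.map l2norm).sum ≤ γ / √a * E + 2 * (√a)⁻¹ * (√k)⁻¹ * ξ := by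
    rw [hak, Real.sqrt_mul ha0.le] at hSt
    calc (us.map l2norm).sum ≤ (√a * √k)⁻¹ * (γ * √k * E + 2 * ξ) :=
          hSt.trans (mul_le_mul_of_nonneg_left hcone (by positivity))
      _ = _ := by field_simp
  have hγ0 : 0 ≤ γ := hγ ▸ add_nonneg hω0 (mul_nonneg (sub_nonneg.mpr hω1) (Real.sqrt_nonneg _))
  calc l2norm (xs - x)
      ≤ _ := le_of_rip_estimates (ε := ε) (Real.sqrt_nonneg _) (by positivity)
        (div_mul_sqrt_lt_sqrt_of_ripCondition (ripConst_nonneg A ak) ha0 hRIP) hsplit htail_le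
        (hlow.trans (by linarith [l2norm_mulVec_sub_le_two_mul hy he hfeas]))
    _ = _ := by rw [Real.rpow_neg hk0.le, ← Real.sqrt_eq_rpow]; ring

/-- Theorem 3.2 of the paper: stable and robust recovery of an arbitrary
signal from noisy measurements via weighted ℓ1 minimization with partial support information. -/
theorem weighted_l1_recovery
    {n N : ℕ} (A : Matrix (Fin n) (Fin N) ℝ)
    (x : Fin N → ℝ) (e : Fin n → ℝ) (y : Fin n → ℝ)
    (k ak : ℕ) (a ρ α ω ε γ : ℝ)
    (T0 Tt : Finset (Fin N)) (xk : Fin N → ℝ) (w : Fin N → ℝ)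
    (hk : 1 ≤ k)
    -- `xk` is the best `k`-term approximation of `x`, supported on `T0` with `|T0| = k`
    (hT0card : T0.card = k)
    (hxk : xk = restrict x T0)
    (hbest : ∀ i ∈ T0, ∀ j ∉ T0, |x j| ≤ |x i|)
    -- the support estimate `Tt` has `|Tt| = ρk` and `|Tt ∩ T0| = αρk`
    (hTtcard : (Tt.card : ℝ) = ρ * k)
    (hTtT0card : ((Tt ∩ T0).card : ℝ) = α * ρ * k)
    -- `a` is a real number with `ak` an integer, `a ≥ (1-α)ρ`, `a > 1`
    (hak : (ak : ℝ) = a * k)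
    (ha : 1 < a)
    (haαρ : (1 - α) * ρ ≤ a)
    -- the weight `ω ∈ [0,1]` and `γ = ω + (1-ω)√(1+ρ-2αρ)`
    (hω0 : 0 ≤ ω) (hω1 : ω ≤ 1)
    (hγ : γ = ω + (1 - ω) * Real.sqrt (1 + ρ - 2 * α * ρ))
    -- RIP condition: `δ_{ak} + (a/γ²) δ_{(a+1)k} < a/γ² - 1`
    (hRIP : ripConst A ak + (a / γ ^ 2) * ripConst A (ak + k) < a / γ ^ 2 - 1)
    -- measurements `y = Ax + e` with `‖e‖₂ ≤ ε`
    (hy : y = A.mulVec x + e)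
    (he : l2norm e ≤ ε)
    -- the weights: `ω` on `Tt`, `1` on `Ttᶜ`
    (hw : ∀ i, w i = if i ∈ Tt then ω else 1)
    -- `xs` is any solution of the weighted ℓ1 problem
    (xs : Fin N → ℝ)
    (hfeas : l2norm (A.mulVec xs - y) ≤ ε)
    (hopt : wl1norm w xs ≤ wl1norm w x) :
    l2norm (xs - x) ≤
      (2 * (1 + γ / Real.sqrt a) /
          (Real.sqrt (1 - ripConst A (ak + k)) -
            (γ / Real.sqrt a) * Real.sqrt (1 + ripConst A ak))) * ε
      + (2 * (Real.sqrt a)⁻¹ * (Real.sqrt (1 - ripConst A (ak + k)) +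
            Real.sqrt (1 + ripConst A ak)) /
          (Real.sqrt (1 - ripConst A (ak + k)) -
            (γ / Real.sqrt a) * Real.sqrt (1 + ripConst A ak)))
        * (k : ℝ) ^ (-(1 / 2 : ℝ))
        * (ω * l1norm (x - xk) + (1 - ω) * l1norm (restrict x (Ttᶜ ∩ T0ᶜ))) :=
  weighted_l1_recovery_general A x e y k ak a ρ α ω ε γ T0 Tt xk w hk hT0card hxk hTtcard hTtT0card
    hak ha haαρ hω0 hω1 hγ hRIP hy he hw xs hfeas hopt
end

section
/- Fix a > 1, k ≥ 1, ρ > 0, 0 ≤ α ≤ 1, and nonnegative constants δ_{ak}, δ_{(a+1)k} < 1, and set γ(ω) = ω + (1−ω)·√(1+ρ−2αρ), C0′(ω) = 2(1 + γ(ω)/√a)/(√(1−δ_{(a+1)k}) − (γ(ω)/√a)·√(1+δ_{ak})), C1′(ω) = 2a^{−1/2}(√(1−δ_{(a+1)k}) + √(1+δ_{ak}))/(√(1−δ_{(a+1)k}) − (γ(ω)/√a)·√(1+δ_{ak})); let C0 and C1 be their values at ω = 1.] Suppose 0 ≤ ω < 1 and the denominators √(1−δ_{(a+1)k}) − (γ(ω)/√a)·√(1+δ_{ak})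 and √(1−δ_{(a+1)k}) − (1/√a)·√(1+δ_{ak}) are positive. Then C0′(ω) < C0 and C1′(ω) < C1 if and only if α > 1/2. -/
open scoped BigOperators

/-!
Put `s = √(1 - δ_{(a+1)k})`, `t = √(1 + δ_{ak})` and `x = γ(ω)/√a`. Since `γ(1) = 1`, both
comparisons are between the values of a function of `x` at `γ(ω)/√a` and at `1/√a`. Both
`2(1 + x)/(s - xt)` and `N/(s - xt)` (with `N > 0`) are strictly increasing in `x` while the
denominator stays positive, so each of `C0′(ω) < C0` and `C1′(ω) < C1` holds iff `γ(ω) < 1`.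
Finally `γ(ω) - 1 = (1 - ω)(√(1 + ρ - 2αρ) - 1)`, which is negative iff `1 + ρ - 2αρ < 1`,
i.e. iff `α > 1/2`.
-/

theorem add_one_sub_mul_lt_one_iff {ω c : ℝ} (hω : ω < 1) : ω + (1 - ω) * c < 1 ↔ c < 1 := by
  have key : 1 - (ω + (1 - ω) * c) = (1 - ω) * (1 - c) := by ring
  rw [← sub_pos, key, mul_pos_iff_of_pos_left (sub_pos.mpr hω), sub_pos]

theorem sqrt_one_add_sub_lt_one_iff {ρ α : ℝ} (hρ : 0 < ρ) :
    Real.sqrt (1 + ρ - 2 * α * ρ) < 1 ↔ 1 / 2 < α := by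
  rw [Real.sqrt_lt' one_pos]
  constructor <;> intro h <;> nlinarith

theorem mul_one_add_div_sub_mul_lt_iff {c s t x y : ℝ} (hc : 0 < c) (hst : 0 < s + t)
    (hx : 0 < s - x * t) (hy : 0 < s - y * t) :
    c * (1 + x) / (s - x * t) < c * (1 + y) / (s - y * t) ↔ x < y := by
  have key : (1 + y) * (s - x * t) - (1 + x) * (s - y * t) = (y - x) * (s + t) := by ring
  rw [mul_div_assoc, mul_div_assoc, mul_lt_mul_iff_right₀ hc, div_lt_div_iff₀ hx hy,
    ← sub_pos, key, mul_pos_iff_of_pos_right hst, sub_pos]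

theorem div_sub_mul_lt_div_sub_mul_iff {N s t x y : ℝ} (hN : 0 < N) (ht : 0 < t)
    (hx : 0 < s - x * t) (hy : 0 < s - y * t) :
    N / (s - x * t) < N / (s - y * t) ↔ x < y := by
  rw [div_lt_div_iff_of_pos_left hN hx hy, sub_lt_sub_iff_left, mul_lt_mul_iff_left₀ ht]

theorem constants_smaller_iff_alpha_gt_half_general
    (a ρ α δak δa1k ω : ℝ)
    (γ C0' C1' : ℝ → ℝ)
    (ha : 1 < a)
    (hρ : 0 < ρ)
    (hδak0 : 0 ≤ δak)
    (hγ : ∀ ω', γ ω' = ω' + (1 - ω') * Real.sqrt (1 + ρ - 2 * α * ρ))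
    (hC0' : ∀ ω', C0' ω' =
      2 * (1 + γ ω' / Real.sqrt a) /
        (Real.sqrt (1 - δa1k) - (γ ω' / Real.sqrt a) * Real.sqrt (1 + δak)))
    (hC1' : ∀ ω', C1' ω' =
      2 * (Real.sqrt a)⁻¹ * (Real.sqrt (1 - δa1k) + Real.sqrt (1 + δak)) /
        (Real.sqrt (1 - δa1k) - (γ ω' / Real.sqrt a) * Real.sqrt (1 + δak)))
    (hω1 : ω < 1)
    -- the denominators (at `ω` and at `1`) are positive
    (hdenω : 0 < Real.sqrt (1 - δa1k) - (γ ω / Real.sqrt a) * Real.sqrt (1 + δak))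
    (hden1 : 0 < Real.sqrt (1 - δa1k) - (γ 1 / Real.sqrt a) * Real.sqrt (1 + δak)) :
    (C0' ω < C0' 1 ∧ C1' ω < C1' 1) ↔ 1 / 2 < α := by
  have hr : 0 < Real.sqrt a := Real.sqrt_pos.mpr (by linarith)
  have ht : 0 < Real.sqrt (1 + δak) := Real.sqrt_pos.mpr (by linarith)
  have hst : 0 < Real.sqrt (1 - δa1k) + Real.sqrt (1 + δak) :=
    add_pos_of_nonneg_of_pos (Real.sqrt_nonneg _) ht
  have hγ1 : γ 1 = 1 := by rw [hγ]; ring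
  have hγω : γ ω < 1 ↔ 1 / 2 < α := by
    rw [hγ, add_one_sub_mul_lt_one_iff hω1, sqrt_one_add_sub_lt_one_iff hρ]
  rw [hC0', hC0', hC1', hC1', mul_one_add_div_sub_mul_lt_iff two_pos hst hdenω hden1,
    div_sub_mul_lt_div_sub_mul_iff (by positivity) ht hdenω hden1, and_self, hγ1,
    div_lt_div_iff_of_pos_right hr, hγω]

/-- Proposition, part (iii): for `0 ≤ ω < 1`, the weighted ℓ1 stability
constants are strictly smaller than the standard ℓ1 ones if and only if the support
estimate is more than 50% accurate, i.e. `α > 1/2`. -/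
theorem constants_smaller_iff_alpha_gt_half
    (a ρ α δak δa1k ω : ℝ) (k : ℕ)
    (γ C0' C1' : ℝ → ℝ)
    (ha : 1 < a) (hk : 1 ≤ k)
    (hρ : 0 < ρ) (hα0 : 0 ≤ α) (hα1 : α ≤ 1)
    (hδak0 : 0 ≤ δak) (hδa1k0 : 0 ≤ δa1k)
    (hδak1 : δak < 1) (hδa1k1 : δa1k < 1)
    (hγ : ∀ ω', γ ω' = ω' + (1 - ω') * Real.sqrt (1 + ρ - 2 * α * ρ))
    (hC0' : ∀ ω', C0' ω' =
      2 * (1 + γ ω' / Real.sqrt a) /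
        (Real.sqrt (1 - δa1k) - (γ ω' / Real.sqrt a) * Real.sqrt (1 + δak)))
    (hC1' : ∀ ω', C1' ω' =
      2 * (Real.sqrt a)⁻¹ * (Real.sqrt (1 - δa1k) + Real.sqrt (1 + δak)) /
        (Real.sqrt (1 - δa1k) - (γ ω' / Real.sqrt a) * Real.sqrt (1 + δak)))
    (hω0 : 0 ≤ ω) (hω1 : ω < 1)
    -- the denominators (at `ω` and at `1`) are positive
    (hdenω : 0 < Real.sqrt (1 - δa1k) - (γ ω / Real.sqrt a) * Real.sqrt (1 + δak))
    (hden1 : 0 < Real.sqrt (1 - δa1k) - (γ 1 / Real.sqrt a) * Real.sqrt (1 + δak)) :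
    (C0' ω < C0' 1 ∧ C1' ω < C1' 1) ↔ 1 / 2 < α :=
  constants_smaller_iff_alpha_gt_half_general a ρ α δak δa1k ω γ C0' C1' ha hρ hδak0 hγ hC0' hC1'
    hω1 hdenω hden1
end

section
/- Let x, h ∈ ℝ^N, let T0, T̃ ⊆ {1,…,N}, and let 0 ≤ ω ≤ 1. Define the weight vector w by w_i = ω for i ∈ T̃ and w_i = 1 for i ∈ T̃ᶜ. If ‖x + h‖_{1,w} ≤ ‖x‖_{1,w}, then ω·‖h_{T0ᶜ}‖₁ + (1−ω)·‖h_{T̃ᶜ∩T0ᶜ}‖₁ ≤ ω·‖h_{T0}‖₁ + (1−ω)·‖h_{T̃ᶜ∩T0}‖₁ + 2·(ω·‖x_{T0ᶜ}‖₁ + (1−ω)·‖x_{T̃ᶜ∩T0ᶜ}‖₁). -/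
/-! With this weight, `ω‖v_S‖₁ + (1-ω)‖v_{T̃ᶜ∩S}‖₁ = ‖v_S‖_{1,w}` for every `S`, so the claim is the
usual cone inequality for the seminorm `‖·‖_{1,w}`: split `‖x + h‖_{1,w} ≤ ‖x‖_{1,w}` over `T0` and
`T0ᶜ` and use `‖(x+h)_{T0}‖ ≥ ‖x_{T0}‖ - ‖h_{T0}‖` and `‖(x+h)_{T0ᶜ}‖ ≥ ‖h_{T0ᶜ}‖ - ‖x_{T0ᶜ}‖`. -/

open scoped BigOperators

theorem restrict_add {ι : Type*} [DecidableEq ι] (u v : ι → ℝ) (S : Finset ι) :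
    restrict (u + v) S = restrict u S + restrict v S := by
  funext i
  by_cases hi : i ∈ S <;> simp [restrict, hi]

theorem wl1norm_restrict_add_restrict_compl {ι : Type*} [Fintype ι] [DecidableEq ι]
    (w v : ι → ℝ) (S : Finset ι) :
    wl1norm w (restrict v S) + wl1norm w (restrict v Sᶜ) = wl1norm w v := by
  simp only [wl1norm, ← Finset.sum_add_distrib]
  refine Finset.sum_congr rfl fun i _ => ?_
  by_cases hi : i ∈ S <;> simp [restrict, hi]

theorem wl1norm_le_wl1norm_add_add {ι : Type*} [Fintype ι] {w : ι → ℝ} (hw : 0 ≤ w)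
    (u v : ι → ℝ) :
    wl1norm w u ≤ wl1norm w (u + v) + wl1norm w v := by
  simp only [wl1norm, ← Finset.sum_add_distrib, ← mul_add]
  refine Finset.sum_le_sum fun i _ => mul_le_mul_of_nonneg_left ?_ (hw i)
  simpa using abs_sub (u i + v i) (v i)

theorem wl1norm_restrict_compl_le {ι : Type*} [Fintype ι] [DecidableEq ι] {w : ι → ℝ}
    (hw : 0 ≤ w) {x h : ι → ℝ} (hcone : wl1norm w (x + h) ≤ wl1norm w x) (S : Finset ι) :
    wl1norm w (restrict h Sᶜ) ≤ wl1norm w (restrict h S) + 2 * wl1norm w (restrict x Sᶜ) := by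
  have on_S := wl1norm_le_wl1norm_add_add hw (restrict x S) (restrict h S)
  have off_S := wl1norm_le_wl1norm_add_add hw (restrict h Sᶜ) (restrict x Sᶜ)
  rw [← restrict_add] at on_S off_S
  rw [add_comm h x] at off_S
  rw [← wl1norm_restrict_add_restrict_compl w (x + h) S,
    ← wl1norm_restrict_add_restrict_compl w x S] at hcone
  linarith

theorem wl1norm_restrict_of_eq_ite {ι : Type*} [Fintype ι] [DecidableEq ι] {w : ι → ℝ}
    {T : Finset ι} {ω : ℝ} (hw : ∀ i, w i = if i ∈ T then ω else 1)
    (v : ι → ℝ) (S : Finset ι) :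
    wl1norm w (restrict v S) =
      ω * l1norm (restrict v S) + (1 - ω) * l1norm (restrict v (Tᶜ ∩ S)) := by
  simp only [wl1norm, l1norm, Finset.mul_sum, ← Finset.sum_add_distrib]
  refine Finset.sum_congr rfl fun i _ => ?_
  rw [hw i]
  by_cases hS : i ∈ S <;> by_cases hT : i ∈ T <;> simp [restrict, hS, hT, ← add_mul]

theorem weighted_cone_inequality_general
    {N : ℕ} (x h : Fin N → ℝ) (T0 Tt : Finset (Fin N)) (ω : ℝ) (w : Fin N → ℝ)
    (hω0 : 0 ≤ ω)
    (hw : ∀ i, w i = if i ∈ Tt then ω else 1)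
    (hcone : wl1norm w (x + h) ≤ wl1norm w x) :
    ω * l1norm (restrict h T0ᶜ) + (1 - ω) * l1norm (restrict h (Ttᶜ ∩ T0ᶜ)) ≤
      ω * l1norm (restrict h T0) + (1 - ω) * l1norm (restrict h (Ttᶜ ∩ T0))
        + 2 * (ω * l1norm (restrict x T0ᶜ) + (1 - ω) * l1norm (restrict x (Ttᶜ ∩ T0ᶜ))) := by
  have hw_nonneg : 0 ≤ w := fun i => by
    rw [Pi.zero_apply, hw i]
    split_ifs <;> linarith
  simpa only [wl1norm_restrict_of_eq_ite hw] using wl1norm_restrict_compl_le hw_nonneg hcone T0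

/-- the weighted ℓ1 cone constraint implies the basic inequality
relating the pieces of `h` and `x` on `T0`, `T0ᶜ`, and the support estimate `Tt`. -/
theorem weighted_cone_inequality
    {N : ℕ} (x h : Fin N → ℝ) (T0 Tt : Finset (Fin N)) (ω : ℝ) (w : Fin N → ℝ)
    (hω0 : 0 ≤ ω) (hω1 : ω ≤ 1)
    (hw : ∀ i, w i = if i ∈ Tt then ω else 1)
    (hcone : wl1norm w (x + h) ≤ wl1norm w x) :
    ω * l1norm (restrict h T0ᶜ) + (1 - ω) * l1norm (restrict h (Ttᶜ ∩ T0ᶜ)) ≤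
      ω * l1norm (restrict h T0) + (1 - ω) * l1norm (restrict h (Ttᶜ ∩ T0))
        + 2 * (ω * l1norm (restrict x T0ᶜ) + (1 - ω) * l1norm (restrict x (Ttᶜ ∩ T0ᶜ))) :=
  weighted_cone_inequality_general x h T0 Tt ω w hω0 hw hcone
end
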